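/- arXiv:2605.07899 — 7 statements merged into one kernel-verified Lean document; each statement's English description precedes it below -/
import Mathlib

section
/- Let (G, Σ, χ, D) be a Word Retrieval instance with auxiliary directed graph H = (V, A), and let π be an ordering (permutation) of the vertex set V of G. Then π is a topological ordering of H if and only if π is a generalized solution for the instance, i.e., for all indices 1 ≤ i < j ≤ |V|, {π(i), π(j)} is an edge of G if and only if (χ(π(i)), χ(π(j))) ∈ D. -/
/-- The arc relation of the auxiliary directed graph `H` of a Word Retrieval
instance `(G, χ, D)`: for distinct `u, v`, there is an arc `(u, v)` iff either
`{u, v} ∈ E` and `(χ v, χ u) ∉ D`, or `{u, v} ∉ E` and `(χ v, χ u) ∈ D`. -/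
def wrArc {V A : Type*} (G : SimpleGraph V) (χ : V → A) (D : Set (A × A))
    (u v : V) : Prop :=
  u ≠ v ∧ ((G.Adj u v ∧ (χ v, χ u) ∉ D) ∨ (¬ G.Adj u v ∧ (χ v, χ u) ∈ D))

/-- An ordering `π` of the vertices of a Word Retrieval instance is a topological
ordering of the auxiliary directed graph `H` (no arc goes from a later vertex to an
earlier one) iff it is a generalized solution, i.e. for all `i < j`,
`π i` and `π j` are adjacent in `G` iff `(χ (π i), χ (π j)) ∈ D`. -/
theorem topologicalOrdering_iff_generalizedSolution {V A : Type*} [Fintype V] [Fintype A]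
    (G : SimpleGraph V) (χ : V → A) (D : Set (A × A))
    (π : Fin (Fintype.card V) ≃ V) :
    (∀ i j : Fin (Fintype.card V), i < j → ¬ wrArc G χ D (π j) (π i)) ↔
      (∀ i j : Fin (Fintype.card V), i < j →
        (G.Adj (π i) (π j) ↔ (χ (π i), χ (π j)) ∈ D)) := by
  constructor <;> intro h i j hij <;> have := h i j hij <;>
    simp only [wrArc, G.adj_comm (π j) (π i)] at this ⊢
  · have hne : π j ≠ π i := fun e => hij.ne' (π.injective e)
    tauto
  · exact fun ⟨_, hc⟩ => by tauto
end

section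
/- Let (G, Σ, χ, w) be a Decoder Retrieval instance and let a ∈ Σ. If the color class V_a is an independent set in G, then for every solution D for the instance, the decoder D ∖ {(a,a)} is also a solution. -/
/-- The letter graph `G(D, w)` on vertex set `Fin w.length`: positions `i < j`
are adjacent iff the ordered pair of letters `(w_i, w_j)` lies in the decoder `D`. -/
def letterGraph {A : Type*} (D : Set (A × A)) (w : List A) : SimpleGraph (Fin w.length) where
  Adj i j := (i < j ∧ (w.get i, w.get j) ∈ D) ∨ (j < i ∧ (w.get j, w.get i) ∈ D)
  symm := by constructor; intro i j h; exact h.symm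
  loopless := by constructor; intro i h; rcases h with ⟨h, -⟩ | ⟨h, -⟩ <;> exact lt_irrefl _ h

/-- `D` is a solution for the decoder-retrieval data `(G, χ, w)`: there is a graph
isomorphism from `G` to the letter graph `G(D, w)` that respects the coloring `χ`. -/
def IsSolution {V A : Type*} (G : SimpleGraph V) (χ : V → A) (w : List A)
    (D : Set (A × A)) : Prop :=
  ∃ f : G ≃g letterGraph D w, ∀ v : V, χ v = w.get (f v)

section

variable {V A : Type*}

theorem letterGraph_mono {D D' : Set (A × A)} (h : D ⊆ D') (w : List A) :
    letterGraph D w ≤ letterGraph D' w := by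
  rintro i j (⟨hij, hD⟩ | ⟨hji, hD⟩)
  exacts [Or.inl ⟨hij, h hD⟩, Or.inr ⟨hji, h hD⟩]

theorem letterGraph_diff_adj_of_adj {D S : Set (A × A)} {w : List A} {i j : Fin w.length}
    (h : (letterGraph D w).Adj i j) (hij : (w.get i, w.get j) ∉ S)
    (hji : (w.get j, w.get i) ∉ S) : (letterGraph (D \ S) w).Adj i j := by
  rcases h with ⟨hlt, hD⟩ | ⟨hlt, hD⟩
  exacts [Or.inl ⟨hlt, hD, hij⟩, Or.inr ⟨hlt, hD, hji⟩]

theorem IsSolution.diff {G : SimpleGraph V} {χ : V → A} {w : List A} {D : Set (A × A)}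
    (hD : IsSolution G χ w D) {S : Set (A × A)} (hS : ∀ u v, G.Adj u v → (χ u, χ v) ∉ S) :
    IsSolution G χ w (D \ S) := by
  obtain ⟨f, hf⟩ := hD
  refine ⟨⟨f.toEquiv, fun {u v} => ⟨fun h => ?_, fun h => ?_⟩⟩, hf⟩
  · exact f.map_adj_iff.mp (letterGraph_mono Set.sdiff_subset w h)
  · have hS' : ∀ u v, G.Adj u v → (w.get (f u), w.get (f v)) ∉ S := fun u v huv => by
      rw [← hf, ← hf]
      exact hS u v huv
    exact letterGraph_diff_adj_of_adj (f.map_adj_iff.mpr h) (hS' u v h) (hS' v u h.symm)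

end

theorem solution_diff_self_pair_of_independent_general {V A : Type*}
    (G : SimpleGraph V) (χ : V → A) (w : List A)
    (a : A)
    (hindep : ∀ u v : V, χ u = a → χ v = a → u ≠ v → ¬ G.Adj u v)
    (D : Set (A × A)) (hD : IsSolution G χ w D) :
    IsSolution G χ w (D \ {(a, a)}) :=
  hD.diff fun u v huv hmem =>
    have ⟨hu, hv⟩ := Prod.mk.inj hmem
    hindep u v hu hv (G.ne_of_adj huv) huv

/-- If the color class `V_a` is an independent set in `G`, then for every solution
`D` of the Decoder Retrieval instance, `D \ {(a, a)}` is also a solution. -/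
theorem solution_diff_self_pair_of_independent {V A : Type*} [Fintype V] [Fintype A] [DecidableEq A]
    (G : SimpleGraph V) (χ : V → A) (w : List A)
    (hcls : ∀ b : A, ∃ v : V, χ v = b)
    (hlen : w.length = Fintype.card V)
    (hcount : ∀ b : A, w.count b = (Finset.univ.filter fun v => χ v = b).card)
    (a : A)
    (hindep : ∀ u v : V, χ u = a → χ v = a → u ≠ v → ¬ G.Adj u v)
    (D : Set (A × A)) (hD : IsSolution G χ w D) :
    IsSolution G χ w (D \ {(a, a)}) :=
  solution_diff_self_pair_of_independent_general G χ w a hindep D hD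
end

section
/- Let (G, Σ, χ, w) be a Decoder Retrieval instance and let a ∈ Σ. If the color class V_a is neither a clique nor an independent set in G, then the instance has no solution, i.e., no decoder D ⊆ Σ×Σ is a solution. -/
theorem letterGraph_adj_of_get_eq {A : Type*} {D : Set (A × A)} {w : List A}
    {i j : Fin w.length} {a : A} (hi : w.get i = a) (hj : w.get j = a) :
    (letterGraph D w).Adj i j ↔ i ≠ j ∧ (a, a) ∈ D := by
  simp only [letterGraph, hi, hj, ne_iff_lt_or_gt]
  tauto

theorem IsSolution.adj_iff_of_color_eq {V A : Type*} {G : SimpleGraph V} {χ : V → A}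
    {w : List A} {D : Set (A × A)} (hD : IsSolution G χ w D) {u v : V} {a : A}
    (hu : χ u = a) (hv : χ v = a) : G.Adj u v ↔ u ≠ v ∧ (a, a) ∈ D := by
  obtain ⟨f, hf⟩ := hD
  rw [← f.map_adj_iff, letterGraph_adj_of_get_eq ((hf u).symm.trans hu)
    ((hf v).symm.trans hv), f.injective.ne_iff]

theorem IsSolution.isClique_or_isIndepSet_colorClass {V A : Type*} {G : SimpleGraph V}
    {χ : V → A} {w : List A} {D : Set (A × A)} (hD : IsSolution G χ w D) (a : A) :
    G.IsClique (χ ⁻¹' {a}) ∨ G.IsIndepSet (χ ⁻¹' {a}) := by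
  by_cases haa : (a, a) ∈ D
  · exact .inl fun u hu v hv huv => (hD.adj_iff_of_color_eq hu hv).2 ⟨huv, haa⟩
  · exact .inr fun u hu v hv _ hadj => haa (hD.adj_iff_of_color_eq hu hv |>.1 hadj).2

theorem no_solution_of_not_clique_not_independent_general {V A : Type*}
    (G : SimpleGraph V) (χ : V → A) (w : List A)
    (a : A)
    (hnc : ¬ ∀ u v : V, χ u = a → χ v = a → u ≠ v → G.Adj u v)
    (hni : ¬ ∀ u v : V, χ u = a → χ v = a → u ≠ v → ¬ G.Adj u v) :
    ∀ D : Set (A × A), ¬ IsSolution G χ w D := by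
  intro D hD
  rcases hD.isClique_or_isIndepSet_colorClass a with hclique | hindep
  · exact hnc fun u v hu hv huv => hclique hu hv huv
  · exact hni fun u v hu hv huv => hindep hu hv huv

/-- If a color class `V_a` is neither a clique nor an independent set in `G`,
then the Decoder Retrieval instance has no solution. -/
theorem no_solution_of_not_clique_not_independent {V A : Type*} [Fintype V] [Fintype A] [DecidableEq A]
    (G : SimpleGraph V) (χ : V → A) (w : List A)
    (hcls : ∀ b : A, ∃ v : V, χ v = b)
    (hlen : w.length = Fintype.card V)
    (hcount : ∀ b : A, w.count b = (Finset.univ.filter fun v => χ v = b).card)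
    (a : A)
    (hnc : ¬ ∀ u v : V, χ u = a → χ v = a → u ≠ v → G.Adj u v)
    (hni : ¬ ∀ u v : V, χ u = a → χ v = a → u ≠ v → ¬ G.Adj u v) :
    ∀ D : Set (A × A), ¬ IsSolution G χ w D :=
  no_solution_of_not_clique_not_independent_general G χ w a hnc hni
end

section
/- Let (G, Σ, χ, w) be a Decoder Retrieval instance and let {a,b} be a one-sided letter pair. Then every solution D for the instance contains exactly one of the two pairs (a,b) and (b,a), i.e., |D ∩ {(a,b),(b,a)}| = 1. -/
/-- The color class `V_a` as a finset. -/
def classFinset {V A : Type*} [Fintype V] [DecidableEq A] (χ : V → A) (a : A) : Finset V :=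
  Finset.univ.filter fun v => χ v = a

/-- The number of edges of `G` between `V_a` and `V_b` (for `a ≠ b`),
counted as ordered pairs `(u, v)` with `u ∈ V_a`, `v ∈ V_b`, `u ~ v`. -/
def crossCard {V A : Type*} [Fintype V] [DecidableEq A] (G : SimpleGraph V)
    [DecidableRel G.Adj] (χ : V → A) (a b : A) : ℕ :=
  ((classFinset χ a ×ˢ classFinset χ b).filter fun p => G.Adj p.1 p.2).card

/-- The letter pair `{a, b}` is one-sided: `a ≠ b` and `0 < |E(V_a, V_b)| < |V_a| · |V_b|`. -/
def OneSided {V A : Type*} [Fintype V] [DecidableEq A] (G : SimpleGraph V)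
    [DecidableRel G.Adj] (χ : V → A) (a b : A) : Prop :=
  a ≠ b ∧ 0 < crossCard G χ a b ∧
    crossCard G χ a b < (classFinset χ a).card * (classFinset χ b).card

/-
Whether a vertex of colour `a` and a vertex of colour `b` are adjacent in a letter graph depends
only on their order in the word and on which of `(a, b)`, `(b, a)` lie in the decoder. Containing
both pairs makes `V_a` and `V_b` completely joined, containing neither makes them anticomplete;
a one-sided pair is neither, so a solution contains exactly one of the two pairs.
-/

theorem letterGraph_adj_iff {A : Type*} {D : Set (A × A)} {w : List A} {i j : Fin w.length}
    {a b : A} (hi : w.get i = a) (hj : w.get j = b) :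
    (letterGraph D w).Adj i j ↔ (i < j ∧ (a, b) ∈ D) ∨ (j < i ∧ (b, a) ∈ D) := by
  subst hi hj
  rfl

section Solution

variable {V A : Type*} {G : SimpleGraph V} {χ : V → A} {w : List A} {D : Set (A × A)}
  (f : G ≃g letterGraph D w) (hf : ∀ v, χ v = w.get (f v))
include hf

theorem adj_iff_of_respects {u v : V} {a b : A} (hu : χ u = a) (hv : χ v = b) :
    G.Adj u v ↔ (f u < f v ∧ (a, b) ∈ D) ∨ (f v < f u ∧ (b, a) ∈ D) := by
  rw [← f.map_adj_iff]
  exact letterGraph_adj_iff ((hf u).symm.trans hu) ((hf v).symm.trans hv)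

theorem adj_of_respects_of_mem_of_mem {u v : V} {a b : A} (hab : a ≠ b)
    (hu : χ u = a) (hv : χ v = b) (h₁ : (a, b) ∈ D) (h₂ : (b, a) ∈ D) : G.Adj u v := by
  have huv : f u ≠ f v := fun h => hab (hu ▸ hv ▸ congrArg χ (f.injective h))
  rcases huv.lt_or_gt with h | h
  · exact (adj_iff_of_respects f hf hu hv).2 (Or.inl ⟨h, h₁⟩)
  · exact (adj_iff_of_respects f hf hu hv).2 (Or.inr ⟨h, h₂⟩)

theorem not_adj_of_respects_of_not_mem_of_not_mem {u v : V} {a b : A}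
    (hu : χ u = a) (hv : χ v = b) (h₁ : (a, b) ∉ D) (h₂ : (b, a) ∉ D) : ¬ G.Adj u v := by
  rw [adj_iff_of_respects f hf hu hv]
  tauto

end Solution

section CrossCard

variable {V A : Type*} [Fintype V] [DecidableEq A] {G : SimpleGraph V} [DecidableRel G.Adj]
  {χ : V → A} {a b : A}

theorem crossCard_eq_card_mul_card (h : ∀ u v, χ u = a → χ v = b → G.Adj u v) :
    crossCard G χ a b = (classFinset χ a).card * (classFinset χ b).card := by
  rw [crossCard, Finset.filter_true_of_mem, Finset.card_product]
  intro p hp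
  simp only [Finset.mem_product, classFinset, Finset.mem_filter, Finset.mem_univ, true_and] at hp
  exact h _ _ hp.1 hp.2

theorem crossCard_eq_zero (h : ∀ u v, χ u = a → χ v = b → ¬ G.Adj u v) :
    crossCard G χ a b = 0 := by
  rw [crossCard, Finset.card_eq_zero, Finset.filter_eq_empty_iff]
  intro p hp
  simp only [Finset.mem_product, classFinset, Finset.mem_filter, Finset.mem_univ, true_and] at hp
  exact h _ _ hp.1 hp.2

end CrossCard

theorem solution_contains_exactly_one_of_oneSided_general {V A : Type*} [Fintype V] [DecidableEq A]
    (G : SimpleGraph V) [DecidableRel G.Adj] (χ : V → A) (w : List A)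
    (a b : A) (hos : OneSided G χ a b)
    (D : Set (A × A)) (hD : IsSolution G χ w D) :
    ((a, b) ∈ D ∧ (b, a) ∉ D) ∨ ((b, a) ∈ D ∧ (a, b) ∉ D) := by
  obtain ⟨hab, hpos, hlt⟩ := hos
  obtain ⟨f, hf⟩ := hD
  by_cases h₁ : (a, b) ∈ D <;> by_cases h₂ : (b, a) ∈ D
  · have := crossCard_eq_card_mul_card (G := G) fun u v hu hv =>
      adj_of_respects_of_mem_of_mem f hf hab hu hv h₁ h₂
    omega
  · exact Or.inl ⟨h₁, h₂⟩
  · exact Or.inr ⟨h₂, h₁⟩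
  · have := crossCard_eq_zero (G := G) fun u v hu hv =>
      not_adj_of_respects_of_not_mem_of_not_mem f hf hu hv h₁ h₂
    omega

/-- If `{a, b}` is a one-sided letter pair, then every solution `D` of the
Decoder Retrieval instance contains exactly one of the pairs `(a, b)` and `(b, a)`. -/
theorem solution_contains_exactly_one_of_oneSided {V A : Type*} [Fintype V] [Fintype A] [DecidableEq A]
    (G : SimpleGraph V) [DecidableRel G.Adj] (χ : V → A) (w : List A)
    (hcls : ∀ b : A, ∃ v : V, χ v = b)
    (hlen : w.length = Fintype.card V)
    (hcount : ∀ b : A, w.count b = (Finset.univ.filter fun v => χ v = b).card)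
    (a b : A) (hos : OneSided G χ a b)
    (D : Set (A × A)) (hD : IsSolution G χ w D) :
    ((a, b) ∈ D ∧ (b, a) ∉ D) ∨ ((b, a) ∈ D ∧ (a, b) ∉ D) :=
  solution_contains_exactly_one_of_oneSided_general G χ w a b hos D hD
end

section
/- Let (G, Σ, χ, w) be a Decoder Retrieval instance and let {a,b} be a one-sided letter pair such that w[a,b] equals a^x b^y or b^y a^x for some integers x, y ≥ 1 (that is, w[a,b] contains only one a-run and only one b-run). Then the instance has no solution. -/
/-- `w[a, b]`: the maximal subsequence of `w` consisting of occurrences of `a` and `b`. -/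
def pairWord {A : Type*} [DecidableEq A] (a b : A) (w : List A) : List A :=
  w.filter fun c => c = a ∨ c = b

section Words

variable {A : Type*} {a b : A}

theorem pairwise_replicate_append_replicate (hab : a ≠ b) (x y : ℕ) :
    (List.replicate x a ++ List.replicate y b).Pairwise fun c d => ¬(c = b ∧ d = a) := by
  simp only [List.pairwise_append, List.pairwise_replicate, List.mem_replicate]
  refine ⟨Or.inr fun h => hab h.1, Or.inr fun h => hab h.2.symm, ?_⟩
  rintro c ⟨-, rfl⟩ d ⟨-, rfl⟩ h
  exact hab h.1

variable [DecidableEq A] {w : List A}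

theorem pairWord_comm (a b : A) (w : List A) : pairWord b a w = pairWord a b w :=
  List.filter_congr fun c _ => by simp only [or_comm]

theorem lt_of_pairWord_eq_replicate_append (hab : a ≠ b) {x y : ℕ}
    (hw : pairWord a b w = List.replicate x a ++ List.replicate y b)
    {i j : Fin w.length} (hi : w.get i = a) (hj : w.get j = b) : i < j := by
  have hpw := pairwise_replicate_append_replicate hab x y
  rw [← hw, pairWord, List.pairwise_filter, List.pairwise_iff_getElem] at hpw
  refine lt_of_not_ge fun hji => ?_
  have hne : j ≠ i := fun h => hab (by rw [← hi, ← hj, h])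
  have := hpw j i j.isLt i.isLt (lt_of_le_of_ne hji (Fin.val_ne_of_ne hne))
  simp_all

end Words

theorem letterGraph_adj_of_lt {A : Type*} {D : Set (A × A)} {w : List A}
    {i j : Fin w.length} (hij : i < j) :
    (letterGraph D w).Adj i j ↔ (w.get i, w.get j) ∈ D := by
  simp only [letterGraph, hij, true_and, hij.not_gt, false_and, or_false]

section ColorClasses

variable {V A : Type*} [Fintype V] [DecidableEq A] (G : SimpleGraph V) [DecidableRel G.Adj]
  (χ : V → A) {a b : A}

theorem crossCard_comm (a b : A) : crossCard G χ a b = crossCard G χ b a := by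
  unfold crossCard
  apply Finset.card_bij' (fun p _ => (p.2, p.1)) (fun p _ => (p.2, p.1)) <;>
    simp only [Finset.mem_filter, Finset.mem_product, and_imp, Prod.forall] <;>
    intro u v hu hv hadj <;> simp_all [G.adj_comm]

theorem OneSided.symm (h : OneSided G χ a b) : OneSided G χ b a := by
  obtain ⟨hab, hpos, hlt⟩ := h
  exact ⟨hab.symm, crossCard_comm G χ a b ▸ hpos, by rwa [← crossCard_comm, mul_comm]⟩

theorem not_oneSided_of_forall_adj_iff (P : Prop)
    (hP : ∀ u v, χ u = a → χ v = b → (G.Adj u v ↔ P)) : ¬OneSided G χ a b := by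
  rintro ⟨-, hpos, hlt⟩
  by_cases hp : P
  · have hfull : ((classFinset χ a ×ˢ classFinset χ b).filter fun p => G.Adj p.1 p.2) =
        classFinset χ a ×ˢ classFinset χ b := by
      refine Finset.filter_true_of_mem fun ⟨u, v⟩ huv => ?_
      simp only [classFinset, Finset.mem_product, Finset.mem_filter, Finset.mem_univ,
        true_and] at huv
      exact (hP u v huv.1 huv.2).mpr hp
    rw [crossCard, hfull, Finset.card_product] at hlt
    exact lt_irrefl _ hlt
  · obtain ⟨⟨u, v⟩, huv⟩ := Finset.card_pos.mp hpos
    simp only [classFinset, Finset.mem_filter, Finset.mem_product, Finset.mem_univ,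
      true_and] at huv
    exact hp ((hP u v huv.1.1 huv.1.2).mp huv.2)

theorem not_isSolution_of_pairWord_eq_replicate_append {w : List A} (hos : OneSided G χ a b)
    {x y : ℕ} (hw : pairWord a b w = List.replicate x a ++ List.replicate y b)
    (D : Set (A × A)) : ¬IsSolution G χ w D := by
  rintro ⟨f, hf⟩
  refine not_oneSided_of_forall_adj_iff G χ ((a, b) ∈ D) (fun u v hu hv => ?_) hos
  have hfu : w.get (f u) = a := (hf u).symm.trans hu
  have hfv : w.get (f v) = b := (hf v).symm.trans hv
  have hlt : f u < f v := lt_of_pairWord_eq_replicate_append hos.1 hw hfu hfv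
  rw [← f.map_adj_iff, letterGraph_adj_of_lt hlt, hfu, hfv]

end ColorClasses

theorem no_solution_of_oneSided_single_runs_general {V A : Type*} [Fintype V] [DecidableEq A]
    (G : SimpleGraph V) [DecidableRel G.Adj] (χ : V → A) (w : List A)
    (a b : A) (hos : OneSided G χ a b)
    (hform : ∃ x y : ℕ, 1 ≤ x ∧ 1 ≤ y ∧
      (pairWord a b w = List.replicate x a ++ List.replicate y b ∨
        pairWord a b w = List.replicate y b ++ List.replicate x a)) :
    ∀ D : Set (A × A), ¬ IsSolution G χ w D := by
  obtain ⟨x, y, -, -, hw | hw⟩ := hform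
  · exact not_isSolution_of_pairWord_eq_replicate_append G χ hos hw
  · exact not_isSolution_of_pairWord_eq_replicate_append G χ hos.symm
      ((pairWord_comm a b w).trans hw)

/-- If `{a, b}` is a one-sided letter pair and `w[a, b]` equals `a^x b^y` or
`b^y a^x` for some `x, y ≥ 1` (i.e. it has only one `a`-run and one `b`-run),
then the Decoder Retrieval instance has no solution. -/
theorem no_solution_of_oneSided_single_runs {V A : Type*} [Fintype V] [Fintype A] [DecidableEq A]
    (G : SimpleGraph V) [DecidableRel G.Adj] (χ : V → A) (w : List A)
    (hcls : ∀ b : A, ∃ v : V, χ v = b)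
    (hlen : w.length = Fintype.card V)
    (hcount : ∀ b : A, w.count b = (Finset.univ.filter fun v => χ v = b).card)
    (a b : A) (hos : OneSided G χ a b)
    (hform : ∃ x y : ℕ, 1 ≤ x ∧ 1 ≤ y ∧
      (pairWord a b w = List.replicate x a ++ List.replicate y b ∨
        pairWord a b w = List.replicate y b ++ List.replicate x a)) :
    ∀ D : Set (A × A), ¬ IsSolution G χ w D :=
  no_solution_of_oneSided_single_runs_general G χ w a b hos hform
end

section
/- Let (G, Σ, χ, w) be a Decoder Retrieval instance and let {a,b} be a one-sided letter pair such that the word w[a,b] is not a palindrome (it does not equal its reverse). Then there exists d ∈ {(a,b),(b,a)} such that every solution D for the instance contains d. -/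
/-!
In a solution `D`, a one-sided pair `{a, b}` has exactly one of `(a, b)`, `(b, a)` in `D`.
If it is `(a, b)`, the vertex at an `a`-position of `w` is adjacent to exactly the `b`s after
it, so the multiset of `V_b`-degrees of the vertices of `V_a`, which depends only on `(G, χ)`,
is the multiset of these suffix counts of `w`; if it is `(b, a)`, the same holds for the
reversed word. A word over `{a, b}` is determined by its number of `b`s and the multiset of its
suffix counts, so two solutions making different choices force `w[a, b]` to be a palindrome.
-/

section SuffixCounts

variable {A : Type*} [DecidableEq A]

def suffixCounts (a b : A) : List A → List ℕ
  | [] => []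
  | c :: t => if c = a then t.count b :: suffixCounts a b t else suffixCounts a b t

lemma le_count_of_mem_suffixCounts {a b : A} {x : ℕ} {l : List A}
    (hx : x ∈ suffixCounts a b l) : x ≤ l.count b := by
  induction l with
  | nil => simp [suffixCounts] at hx
  | cons c t ih =>
    have hle : t.count b ≤ (c :: t).count b := List.count_le_count_cons ..
    by_cases h : c = a
    · simp only [suffixCounts, if_pos h, List.mem_cons] at hx
      rcases hx with rfl | hx
      · exact hle
      · exact (ih hx).trans hle
    · simp only [suffixCounts, if_neg h] at hx
      exact (ih hx).trans hle

lemma suffixCounts_pairWord (a b : A) (w : List A) :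
    suffixCounts a b (pairWord a b w) = suffixCounts a b w := by
  induction w with
  | nil => rfl
  | cons c t ih =>
    unfold pairWord at ih ⊢
    rw [List.filter_cons]
    by_cases ha : c = a
    · rw [if_pos (by simp [ha]), suffixCounts, if_pos ha, suffixCounts, if_pos ha, ih,
        List.count_filter (by simp)]
    by_cases hb : c = b
    · rw [if_pos (by simp [hb]), suffixCounts, if_neg ha, suffixCounts, if_neg ha, ih]
    · rw [if_neg (by simp [ha, hb]), suffixCounts, if_neg ha, ih]

lemma eq_nil_of_suffixCounts_eq_nil {a b : A} {u : List A} (hu : ∀ c ∈ u, c = a ∨ c = b)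
    (hcount : u.count b = 0) (hcounts : suffixCounts a b u = []) : u = [] := by
  cases u with
  | nil => rfl
  | cons c t =>
    rcases hu c List.mem_cons_self with rfl | rfl
    · simp [suffixCounts] at hcounts
    · simp at hcount

-- The leading `a` of `a :: s` sees more `b`s than any `a` of `b :: s'` can.
lemma suffixCounts_cons_ne {a b : A} (hab : a ≠ b) {s s' : List A}
    (hcount : (a :: s).count b = (b :: s').count b) :
    (suffixCounts a b (a :: s) : Multiset ℕ) ≠ suffixCounts a b (b :: s') := by
  intro h
  rw [suffixCounts, if_pos rfl, suffixCounts, if_neg hab.symm] at h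
  have hmem : s.count b ∈ suffixCounts a b s' := by
    simpa using congrArg (s.count b ∈ ·) h
  have := le_count_of_mem_suffixCounts hmem
  simp [hab] at hcount
  omega

lemma eq_of_suffixCounts_eq {a b : A} (hab : a ≠ b) {u u' : List A}
    (hu : ∀ c ∈ u, c = a ∨ c = b) (hu' : ∀ c ∈ u', c = a ∨ c = b)
    (hcount : u.count b = u'.count b)
    (hcounts : (suffixCounts a b u : Multiset ℕ) = suffixCounts a b u') : u = u' := by
  induction u generalizing u' with
  | nil =>
    exact (eq_nil_of_suffixCounts_eq_nil hu' hcount.symm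
      ((Multiset.coe_eq_zero _).mp hcounts.symm)).symm
  | cons c t ih =>
    cases u' with
    | nil => exact eq_nil_of_suffixCounts_eq_nil hu hcount ((Multiset.coe_eq_zero _).mp hcounts)
    | cons c' t' =>
      have ht : ∀ x ∈ t, x = a ∨ x = b := fun x hx => hu x (List.mem_cons_of_mem _ hx)
      have ht' : ∀ x ∈ t', x = a ∨ x = b := fun x hx => hu' x (List.mem_cons_of_mem _ hx)
      rcases hu c List.mem_cons_self with hc | hc <;>
        rcases hu' c' List.mem_cons_self with hc' | hc' <;> subst c c'
      · have htcount : t.count b = t'.count b := by simpa [List.count_cons, hab] using hcount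
        rw [suffixCounts, if_pos rfl, suffixCounts, if_pos rfl, htcount] at hcounts
        rw [ih ht ht' htcount (Multiset.coe_eq_coe.mpr (Multiset.coe_eq_coe.mp hcounts).cons_inv)]
      · exact absurd hcounts (suffixCounts_cons_ne hab hcount)
      · exact absurd hcounts.symm (suffixCounts_cons_ne hab hcount.symm)
      · have htcount : t.count b = t'.count b := by simpa [List.count_cons] using hcount
        rw [suffixCounts, if_neg hab.symm, suffixCounts, if_neg hab.symm] at hcounts
        rw [ih ht ht' htcount hcounts]

lemma pairWord_reverse (a b : A) (w : List A) :
    pairWord a b w.reverse = (pairWord a b w).reverse :=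
  List.filter_reverse

lemma pairWord_eq_reverse_of_suffixCounts {a b : A} (hab : a ≠ b) {w : List A}
    (h : (suffixCounts a b w : Multiset ℕ) = suffixCounts a b w.reverse) :
    pairWord a b w = (pairWord a b w).reverse := by
  have hmem : ∀ {l : List A}, ∀ c ∈ pairWord a b l, c = a ∨ c = b := fun c hc => by
    simpa [pairWord] using (List.mem_filter.mp hc).2
  refine eq_of_suffixCounts_eq hab hmem (fun c hc => ?_) (List.count_reverse ..).symm ?_
  · rw [← pairWord_reverse] at hc; exact hmem c hc
  · rwa [← pairWord_reverse, suffixCounts_pairWord, suffixCounts_pairWord]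

end SuffixCounts

section ClassDegrees

variable {V W A : Type*} [Fintype V] [Fintype W] [DecidableEq A]

def classDegrees (G : SimpleGraph V) [DecidableRel G.Adj] (χ : V → A) (a b : A) : Multiset ℕ :=
  (classFinset χ a).val.map fun v => ((classFinset χ b).filter (G.Adj v)).card

lemma classFinset_map_equiv {χ : V → A} {χ' : W → A} (e : V ≃ W) (he : ∀ v, χ v = χ' (e v))
    (a : A) : (classFinset χ a).map e.toEmbedding = classFinset χ' a := by
  ext i
  obtain ⟨v, rfl⟩ := e.surjective i
  simp [classFinset, he]

lemma classDegrees_eq_of_iso {G : SimpleGraph V} {H : SimpleGraph W} [DecidableRel G.Adj]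
    [DecidableRel H.Adj] {χ : V → A} {χ' : W → A} (f : G ≃g H) (hf : ∀ v, χ v = χ' (f v))
    (a b : A) : classDegrees G χ a b = classDegrees H χ' a b := by
  rw [classDegrees, classDegrees, ← classFinset_map_equiv f.toEquiv hf a, Finset.map_val,
    Multiset.map_map]
  refine Multiset.map_congr rfl fun v _ => ?_
  rw [Function.comp_apply, ← classFinset_map_equiv f.toEquiv hf b, Finset.filter_map,
    Finset.card_map]
  congr 1
  exact Finset.filter_congr fun u _ => f.map_adj_iff.symm

end ClassDegrees

section LetterGraph

variable {A : Type*} [DecidableEq A]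

lemma card_classFinset_get (w : List A) (b : A) : (classFinset w.get b).card = w.count b := by
  have hw : (Finset.univ.val.map w.get : Multiset A) = w := by
    rw [Fin.univ_val_map, List.ofFn_get]
  rw [← Multiset.coe_count, ← hw, Multiset.count_map, classFinset, Finset.card_def,
    Finset.filter_val]
  simp only [eq_comm]

lemma classFinset_get_cons (c : A) (t : List A) (x : A) :
    classFinset (c :: t).get x = if c = x then
      Finset.cons 0 ((classFinset t.get x).map (Fin.succEmb _)) (by simp [Fin.succ_ne_zero])
    else (classFinset t.get x).map (Fin.succEmb _) := by
  ext i
  cases i using Fin.cases <;> split_ifs <;> simp [classFinset, *]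

lemma filter_succ_lt_classFinset_get_cons (c : A) (t : List A) (x : A) (i : Fin t.length) :
    (classFinset (c :: t).get x).filter (i.succ < ·) =
      ((classFinset t.get x).filter (i < ·)).map (Fin.succEmb _) := by
  ext j
  cases j using Fin.cases <;> simp [classFinset]

lemma filter_zero_lt_classFinset_get_cons (c : A) (t : List A) (x : A) :
    (classFinset (c :: t).get x).filter (0 < ·) = (classFinset t.get x).map (Fin.succEmb _) := by
  ext j
  cases j using Fin.cases <;> simp [classFinset, Fin.succ_pos]

lemma map_card_filter_lt_classFinset_get (a b : A) (w : List A) :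
    (classFinset w.get a).val.map (fun i => ((classFinset w.get b).filter (i < ·)).card) =
      suffixCounts a b w := by
  induction w with
  | nil => rfl
  | cons c t ih =>
    have hzero : ((classFinset (c :: t).get b).filter (0 < ·)).card = t.count b := by
      rw [filter_zero_lt_classFinset_get_cons, Finset.card_map, card_classFinset_get]
    have htail : (classFinset t.get a).val.map
        (fun i => ((classFinset (c :: t).get b).filter (i.succ < ·)).card) = suffixCounts a b t := by
      rw [← ih]
      refine Multiset.map_congr rfl fun i _ => ?_
      exact (congrArg Finset.card (filter_succ_lt_classFinset_get_cons c t b i)).trans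
        (Finset.card_map _)
    rw [classFinset_get_cons c t a, suffixCounts]
    split_ifs <;>
      simp only [Finset.cons_val, Finset.map_val, Multiset.map_cons, Multiset.map_map,
        Function.comp_def, Fin.coe_succEmb, hzero, htail, Multiset.cons_coe]

lemma classDegrees_letterGraph {a b : A} {D : Set (A × A)} (w : List A)
    [DecidableRel (letterGraph D w).Adj] (hab : (a, b) ∈ D) (hba : (b, a) ∉ D) :
    classDegrees (letterGraph D w) w.get a b = suffixCounts a b w := by
  rw [classDegrees, ← map_card_filter_lt_classFinset_get]
  refine Multiset.map_congr rfl fun i hi => ?_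
  congr 1
  refine Finset.filter_congr fun j hj => ?_
  simp only [classFinset, Finset.mem_val, Finset.mem_filter, Finset.mem_univ, true_and,
    List.get_eq_getElem] at hi hj
  simp [letterGraph, hi, hj, hab, hba]

end LetterGraph

section Reverse

variable {A : Type*}

lemma get_reverse_cast_rev (w : List A) (i : Fin w.length) :
    w.reverse.get (i.rev.cast List.length_reverse.symm) = w.get i := by
  simp only [List.get_eq_getElem, List.getElem_reverse, Fin.val_cast, Fin.val_rev]
  congr 1
  omega

def letterGraphReverseIso (D : Set (A × A)) (w : List A) :
    letterGraph D w ≃g letterGraph (Prod.swap ⁻¹' D) w.reverse where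
  toEquiv := Fin.revPerm.trans (finCongr List.length_reverse.symm)
  map_rel_iff' := by
    simp only [letterGraph, Equiv.trans_apply, Fin.revPerm_apply, finCongr_apply,
      get_reverse_cast_rev, Set.mem_preimage, Prod.swap_prod_mk, Fin.cast_lt_cast, Fin.rev_lt_rev]
    exact or_comm

lemma get_reverse_letterGraphReverseIso (D : Set (A × A)) (w : List A) (i : Fin w.length) :
    w.reverse.get (letterGraphReverseIso D w i) = w.get i :=
  get_reverse_cast_rev w i

end Reverse

namespace IsSolution

variable {V A : Type*} {G : SimpleGraph V} {χ : V → A} {w : List A} {D D' : Set (A × A)}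

lemma reverse (h : IsSolution G χ w D) : IsSolution G χ w.reverse (Prod.swap ⁻¹' D) := by
  obtain ⟨f, hf⟩ := h
  exact ⟨f.trans (letterGraphReverseIso D w),
    fun v => (hf v).trans (get_reverse_letterGraphReverseIso D w (f v)).symm⟩

variable [Fintype V] [DecidableEq A] [DecidableRel G.Adj] {a b : A}

lemma mem_or_mem_of_crossCard_pos (h : IsSolution G χ w D) (hpos : 0 < crossCard G χ a b) :
    (a, b) ∈ D ∨ (b, a) ∈ D := by
  obtain ⟨f, hf⟩ := h
  obtain ⟨⟨u, v⟩, huv⟩ := Finset.card_pos.mp hpos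
  simp only [classFinset, Finset.mem_filter, Finset.mem_product, Finset.mem_univ,
    true_and] at huv
  obtain ⟨⟨hu, hv⟩, hadj⟩ := huv
  rw [← hu, ← hv, hf u, hf v]
  exact (f.map_adj_iff.mpr hadj).imp And.right And.right

lemma not_mem_and_mem_of_crossCard_lt (h : IsSolution G χ w D) (hab : a ≠ b)
    (hlt : crossCard G χ a b < (classFinset χ a).card * (classFinset χ b).card) :
    ¬((a, b) ∈ D ∧ (b, a) ∈ D) := by
  rintro ⟨hD, hD'⟩
  obtain ⟨f, hf⟩ := h
  refine hlt.ne ?_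
  rw [crossCard, Finset.filter_true_of_mem, Finset.card_product]
  rintro ⟨u, v⟩ huv
  simp only [classFinset, Finset.mem_product, Finset.mem_filter, Finset.mem_univ,
    true_and] at huv
  obtain ⟨hu, hv⟩ := huv
  have hne : f u ≠ f v := fun he => hab (by rw [← hu, ← hv, f.injective he])
  rw [← hu, ← hv, hf u, hf v] at hD hD'
  exact f.map_adj_iff.mp (hne.lt_or_gt.imp (⟨·, hD⟩) (⟨·, hD'⟩))

lemma mem_iff_notMem_swap (h : IsSolution G χ w D) (hos : OneSided G χ a b) :
    (a, b) ∈ D ↔ (b, a) ∉ D :=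
  ⟨fun hD hD' => h.not_mem_and_mem_of_crossCard_lt hos.1 hos.2.2 ⟨hD, hD'⟩,
    (h.mem_or_mem_of_crossCard_pos hos.2.1).resolve_right⟩

lemma classDegrees_eq (h : IsSolution G χ w D) (hab : (a, b) ∈ D) (hba : (b, a) ∉ D) :
    classDegrees G χ a b = suffixCounts a b w := by
  classical
  obtain ⟨f, hf⟩ := h
  rw [classDegrees_eq_of_iso f hf, classDegrees_letterGraph w hab hba]

lemma pairWord_eq_reverse (h : IsSolution G χ w D) (h' : IsSolution G χ w D') (hne : a ≠ b)
    (hab : (a, b) ∈ D) (hba : (b, a) ∉ D) (hab' : (a, b) ∉ D') (hba' : (b, a) ∈ D') :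
    pairWord a b w = (pairWord a b w).reverse :=
  pairWord_eq_reverse_of_suffixCounts hne <|
    (h.classDegrees_eq hab hba).symm.trans (h'.reverse.classDegrees_eq hba' hab')

end IsSolution

theorem forced_decoder_word_of_not_palindrome_general {V A : Type*} [Fintype V] [DecidableEq A]
    (G : SimpleGraph V) [DecidableRel G.Adj] (χ : V → A) (w : List A)
    (a b : A) (hos : OneSided G χ a b)
    (hpal : pairWord a b w ≠ (pairWord a b w).reverse) :
    ∃ d ∈ ({(a, b), (b, a)} : Set (A × A)),
      ∀ D : Set (A × A), IsSolution G χ w D → d ∈ D := by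
  by_cases hall : ∀ D : Set (A × A), IsSolution G χ w D → (a, b) ∈ D
  · exact ⟨(a, b), by simp, hall⟩
  push Not at hall
  obtain ⟨D', hD', hab'⟩ := hall
  refine ⟨(b, a), by simp, fun D hD => by_contra fun hba => hpal ?_⟩
  have hab : (a, b) ∈ D := (hD.mem_iff_notMem_swap hos).mpr hba
  have hba' : (b, a) ∈ D' := (hD'.mem_or_mem_of_crossCard_pos hos.2.1).resolve_left hab'
  exact hD.pairWord_eq_reverse hD' hos.1 hab hba hab' hba'

/-- If `{a, b}` is a one-sided letter pair and `w[a, b]` is not a palindrome, then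
there is a fixed `d ∈ {(a, b), (b, a)}` contained in every solution of the
Decoder Retrieval instance. -/
theorem forced_decoder_word_of_not_palindrome {V A : Type*} [Fintype V] [Fintype A] [DecidableEq A]
    (G : SimpleGraph V) [DecidableRel G.Adj] (χ : V → A) (w : List A)
    (hcls : ∀ b : A, ∃ v : V, χ v = b)
    (hlen : w.length = Fintype.card V)
    (hcount : ∀ b : A, w.count b = (Finset.univ.filter fun v => χ v = b).card)
    (a b : A) (hos : OneSided G χ a b)
    (hpal : pairWord a b w ≠ (pairWord a b w).reverse) :
    ∃ d ∈ ({(a, b), (b, a)} : Set (A × A)),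
      ∀ D : Set (A × A), IsSolution G χ w D → d ∈ D :=
  forced_decoder_word_of_not_palindrome_general G χ w a b hos hpal
end

section
/- For every finite graph G, the symmetric lettericity of G equals its neighborhood diversity: sl(G) = nd(G). -/
/-- The lettericity of a finite graph `G`: the smallest `k` such that `G` is
isomorphic to a letter graph over an alphabet of size `k`. -/
noncomputable def lettericity {V : Type*} [Fintype V] (G : SimpleGraph V) : ℕ :=
  sInf {k : ℕ | ∃ (D : Set (Fin k × Fin k)) (w : List (Fin k)),
    w.length = Fintype.card V ∧ Nonempty (G ≃g letterGraph D w)}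

/-- The symmetric lettericity of a finite graph `G`: the smallest `k` such that
`G` is isomorphic to a letter graph over an alphabet of size `k` with a symmetric
decoder. -/
noncomputable def symLettericity {V : Type*} [Fintype V] (G : SimpleGraph V) : ℕ :=
  sInf {k : ℕ | ∃ (D : Set (Fin k × Fin k)) (w : List (Fin k)),
    (∀ x y : Fin k, (x, y) ∈ D ↔ (y, x) ∈ D) ∧
    w.length = Fintype.card V ∧ Nonempty (G ≃g letterGraph D w)}

/-- The neighborhood diversity of a finite graph `G`: the smallest number of parts
of a partition of the vertex set such that any two distinct vertices in the same
part are generalized twins (`N(u) \ {v} = N(v) \ {u}`). -/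
noncomputable def neighborhoodDiversity {V : Type*} [Fintype V] [DecidableEq V]
    (G : SimpleGraph V) : ℕ :=
  sInf {p : ℕ | ∃ P : Finpartition (Finset.univ : Finset V), P.parts.card = p ∧
    ∀ s ∈ P.parts, ∀ u ∈ s, ∀ v ∈ s, u ≠ v →
      G.neighborSet u \ {v} = G.neighborSet v \ {u}}

/-!
A labelling `ℓ : V → Fin k` together with a symmetric decoder `D` represents `G` exactly when
`G.Adj u v ↔ u ≠ v ∧ (ℓ u, ℓ v) ∈ D`. Such a `D` exists iff any two distinct vertices with the
same label are generalized twins: twins can be swapped one at a time without changing adjacency,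
and then `D` can be taken to be the set of label pairs of edges. Twin labellings and twin
partitions convert into each other without increasing the number of labels or parts, so both
invariants equal the least size of a twin labelling.
-/

open Finset

lemma Nat.sInf_le_sInf_of_isCoinitialFor {S T : Set ℕ} (hT : T.Nonempty)
    (h : IsCoinitialFor T S) : sInf S ≤ sInf T :=
  let ⟨_, hs, hle⟩ := h (Nat.sInf_mem hT)
  (Nat.sInf_le hs).trans hle

namespace SimpleGraph

variable {V B : Type*} (G : SimpleGraph V)

def IsTwinLabelling (ℓ : V → B) : Prop :=
  ∀ ⦃u v⦄, ℓ u = ℓ v → u ≠ v → G.neighborSet u \ {v} = G.neighborSet v \ {u}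

def labelDecoder (ℓ : V → B) : Set (B × B) :=
  Prod.map ℓ ℓ '' {p | G.Adj p.1 p.2}

variable {G}

lemma mem_labelDecoder_comm {ℓ : V → B} {a b : B} :
    (a, b) ∈ G.labelDecoder ℓ ↔ (b, a) ∈ G.labelDecoder ℓ := by
  constructor <;> rintro ⟨⟨u, v⟩, huv, h⟩ <;> exact ⟨⟨v, u⟩, huv.symm, by simp_all⟩

lemma isTwinLabelling_of_adj_iff {ℓ : V → B} {D : Set (B × B)}
    (hadj : ∀ u v, G.Adj u v ↔ u ≠ v ∧ (ℓ u, ℓ v) ∈ D) : G.IsTwinLabelling ℓ := by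
  intro u v hℓ _
  ext x
  simp only [Set.mem_sdiff, mem_neighborSet, Set.mem_singleton_iff, hadj, hℓ]
  tauto

lemma isTwinLabelling_of_injective {ℓ : V → B} (hℓ : Function.Injective ℓ) :
    G.IsTwinLabelling ℓ :=
  fun _ _ huv hne ↦ absurd (hℓ huv) hne

namespace IsTwinLabelling

variable {ℓ : V → B} (hℓ : G.IsTwinLabelling ℓ)
include hℓ

lemma adj_of_adj_left {u u' x : V} (hu : ℓ u = ℓ u') (h : G.Adj u' x) (hx : x ≠ u) :
    G.Adj u x := by
  obtain rfl | hne := eq_or_ne u u'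
  · exact h
  · have hx' : x ∈ G.neighborSet u' \ {u} := ⟨h, hx⟩
    rw [← hℓ hu hne] at hx'
    exact hx'.1

lemma adj_of_adj {u u' v v' : V} (hu : ℓ u = ℓ u') (hv : ℓ v = ℓ v') (h : G.Adj u' v')
    (huv : u ≠ v) : G.Adj u v := by
  obtain rfl | hv'u := eq_or_ne v' u
  · -- `u`, `u'`, `v` all carry the same label, so we may pivot through `u'`
    obtain rfl | hu'v := eq_or_ne u' v
    · exact h.symm
    · have hvu' : G.Adj v u' := hℓ.adj_of_adj_left hv h.symm hu'v
      exact hℓ.adj_of_adj_left hu hvu'.symm huv.symm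
  · have huv' : G.Adj u v' := hℓ.adj_of_adj_left hu h hv'u
    exact (hℓ.adj_of_adj_left hv huv'.symm huv).symm

lemma adj_iff (u v : V) : G.Adj u v ↔ u ≠ v ∧ (ℓ u, ℓ v) ∈ G.labelDecoder ℓ := by
  refine ⟨fun h ↦ ⟨h.ne, ⟨(u, v), h, rfl⟩⟩, ?_⟩
  rintro ⟨huv, ⟨⟨u', v'⟩, h, hℓuv⟩⟩
  simp only [Prod.map, Prod.mk.injEq] at hℓuv
  exact hℓ.adj_of_adj hℓuv.1.symm hℓuv.2.symm h huv

end IsTwinLabelling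

end SimpleGraph

open SimpleGraph

section letterGraph

variable {A : Type*} {D : Set (A × A)}

lemma letterGraph_adj_iff_of_symm (hD : ∀ x y, (x, y) ∈ D ↔ (y, x) ∈ D) (w : List A)
    (i j : Fin w.length) : (letterGraph D w).Adj i j ↔ i ≠ j ∧ (w.get i, w.get j) ∈ D := by
  constructor
  · rintro (⟨h, hm⟩ | ⟨h, hm⟩)
    · exact ⟨h.ne, hm⟩
    · exact ⟨h.ne', (hD _ _).mpr hm⟩
  · rintro ⟨hne, hm⟩
    rcases hne.lt_or_gt with h | h
    · exact Or.inl ⟨h, hm⟩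
    · exact Or.inr ⟨h, (hD _ _).mp hm⟩

variable {V : Type*} {G : SimpleGraph V}

lemma SimpleGraph.Iso.adj_iff_of_letterGraph (hD : ∀ x y, (x, y) ∈ D ↔ (y, x) ∈ D)
    {w : List A} (e : G ≃g letterGraph D w) (u v : V) :
    G.Adj u v ↔ u ≠ v ∧ (w.get (e u), w.get (e v)) ∈ D := by
  rw [← e.map_rel_iff, letterGraph_adj_iff_of_symm hD, e.injective.ne_iff]

lemma exists_iso_letterGraph [Fintype V] (hD : ∀ x y, (x, y) ∈ D ↔ (y, x) ∈ D) {ℓ : V → A}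
    (hadj : ∀ u v, G.Adj u v ↔ u ≠ v ∧ (ℓ u, ℓ v) ∈ D) :
    ∃ w : List A, w.length = Fintype.card V ∧ Nonempty (G ≃g letterGraph D w) := by
  let e := Fintype.equivFin V
  let w := List.ofFn (ℓ ∘ e.symm)
  have hlen : w.length = Fintype.card V := List.length_ofFn
  let φ : V ≃ Fin w.length := e.trans (finCongr hlen.symm)
  have hget (u : V) : w.get (φ u) = ℓ u := by simp [w, φ]
  refine ⟨w, hlen, ⟨φ, fun {u v} ↦ ?_⟩⟩
  rw [letterGraph_adj_iff_of_symm hD, hget, hget, φ.injective.ne_iff, hadj]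

end letterGraph

section invariants

variable {V : Type*} [Fintype V] (G : SimpleGraph V)

lemma symLettericity_eq_sInf_isTwinLabelling :
    symLettericity G = sInf {k | ∃ ℓ : V → Fin k, G.IsTwinLabelling ℓ} := by
  rw [symLettericity]
  congr 1
  ext k
  constructor
  · rintro ⟨D, w, hD, -, ⟨e⟩⟩
    exact ⟨_, isTwinLabelling_of_adj_iff (e.adj_iff_of_letterGraph hD)⟩
  · rintro ⟨ℓ, hℓ⟩
    obtain ⟨w, hlen, he⟩ := exists_iso_letterGraph (fun _ _ ↦ mem_labelDecoder_comm) hℓ.adj_iff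
    exact ⟨_, w, fun _ _ ↦ mem_labelDecoder_comm, hlen, he⟩

variable [DecidableEq V]

lemma Finpartition.exists_isTwinLabelling (P : Finpartition (univ : Finset V))
    (hP : ∀ s ∈ P.parts, ∀ u ∈ s, ∀ v ∈ s, u ≠ v →
      G.neighborSet u \ {v} = G.neighborSet v \ {u}) :
    ∃ ℓ : V → Fin #P.parts, G.IsTwinLabelling ℓ := by
  let e : P.parts ≃ Fin #P.parts := Fintype.equivFinOfCardEq (Fintype.card_coe _)
  refine ⟨fun v ↦ e ⟨P.part v, P.part_mem.2 (mem_univ v)⟩, fun u v huv hne ↦ ?_⟩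
  have hpart : P.part u = P.part v := congrArg Subtype.val (e.injective huv)
  exact hP _ (P.part_mem.2 (mem_univ u)) u (P.mem_part (mem_univ u)) v
    (hpart ▸ P.mem_part (mem_univ v)) hne

lemma SimpleGraph.IsTwinLabelling.exists_finpartition {k : ℕ} {ℓ : V → Fin k}
    (hℓ : G.IsTwinLabelling ℓ) :
    ∃ P : Finpartition (univ : Finset V), #P.parts ≤ k ∧
      ∀ s ∈ P.parts, ∀ u ∈ s, ∀ v ∈ s, u ≠ v →
        G.neighborSet u \ {v} = G.neighborSet v \ {u} := by
  classical
  let P := Finpartition.ofSetoid (Setoid.ker ℓ)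
  refine ⟨P, ?_, fun s hs u hu v hv hne ↦ hℓ ?_ hne⟩
  · have hsurj :
        Set.SurjOn (fun c ↦ ({v | ℓ v = c} : Finset V)) (univ : Finset (Fin k)) P.parts := by
      intro p hp
      obtain ⟨u, hu⟩ := P.nonempty_of_mem_parts hp
      refine ⟨ℓ u, mem_coe.2 (mem_univ _), ?_⟩
      ext v
      rw [← P.part_eq_of_mem hp hu, Finpartition.mem_part_ofSetoid_iff_rel, Setoid.ker_def]
      simp [eq_comm]
    simpa using card_le_card_of_surjOn _ hsurj
  · rw [← P.part_eq_of_mem hs hu, Finpartition.mem_part_ofSetoid_iff_rel] at hv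
    exact hv

lemma neighborhoodDiversity_eq_sInf_isTwinLabelling :
    neighborhoodDiversity G = sInf {k | ∃ ℓ : V → Fin k, G.IsTwinLabelling ℓ} := by
  have hlabel : {k | ∃ ℓ : V → Fin k, G.IsTwinLabelling ℓ}.Nonempty :=
    ⟨_, _, isTwinLabelling_of_injective (Fintype.equivFin V).injective⟩
  have hpart_of_label : IsCoinitialFor {k | ∃ ℓ : V → Fin k, G.IsTwinLabelling ℓ}
      {p | ∃ P : Finpartition (univ : Finset V), #P.parts = p ∧
        ∀ s ∈ P.parts, ∀ u ∈ s, ∀ v ∈ s, u ≠ v →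
          G.neighborSet u \ {v} = G.neighborSet v \ {u}} := by
    rintro k ⟨ℓ, hℓ⟩
    obtain ⟨P, hcard, hP⟩ := hℓ.exists_finpartition
    exact ⟨_, ⟨P, rfl, hP⟩, hcard⟩
  apply le_antisymm
  · exact Nat.sInf_le_sInf_of_isCoinitialFor hlabel hpart_of_label
  · refine Nat.sInf_le_sInf_of_isCoinitialFor (hpart_of_label.nonempty hlabel) ?_
    rintro p ⟨P, rfl, hP⟩
    exact ⟨_, P.exists_isTwinLabelling G hP, le_rfl⟩

end invariants

/-- The symmetric lettericity of a finite graph equals its neighborhood diversity. -/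
theorem symLettericity_eq_neighborhoodDiversity {V : Type*} [Fintype V] [DecidableEq V]
    (G : SimpleGraph V) :
    symLettericity G = neighborhoodDiversity G := by
  rw [symLettericity_eq_sInf_isTwinLabelling, neighborhoodDiversity_eq_sInf_isTwinLabelling]
end
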